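/- There exists 0 < c₀ < 1/2 such that for every ε ∈ (0, c₀), every T > 10, and every h = (α 0; β γ) ∈ SL_d(ℝ) with α ∈ GL_m(ℝ), γ ∈ GL_n(ℝ), β ∈ M_{n×m}(ℝ), such that both h and h^{-1} satisfy the bounds max{‖α‖_{ν₁}^m, ‖γ‖_{ν₂}^n} < 1 + ε/2 and ‖β‖_{ν₁,ν₂} < ε / (4 n ψ(1)^{1/m}) (where for h^{-1} = (α' 0; β' γ') the bounds are imposed on its blocks α', β', γ'), one has E⁻_{T,ε} ⊆ h·E_T ⊆ E⁺_{T,ε}. -/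

import Mathlib

/-!
On a point `(x, y)` the matrix `h = (α 0; β γ)` acts by `x ↦ α x`, `y ↦ β x + γ y`. The
bound on `α` gives `ν₁(α x)^m ≤ (1 + ε/2) ν₁(x)^m`. On `E_T` one has `ν₁(x)^m ≤ ψ(1)` and
`ν₂(y) ≥ 1`, so the shear term satisfies `ν₂(β x) ≤ ε/(4n) ≤ (ε/(4n)) ν₂(y)`; together with
`‖γ‖, ‖γ⁻¹‖ ≤ 1 + ε/(2n)` (Bernoulli) this puts `ν₂(β x + γ y)` within a factor `1 ± 3ε/(4n)`
of `ν₂(y)`, hence its `n`-th power between `1 - 3ε/4` and `1 + ε` times `ν₂(y)^n`. Since `ψ`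
is non-increasing, this gives `h·E_T ⊆ E⁺` (images with `ν₂^n ≤ 3/2` land in `C₀`), and the
same estimate for `h⁻¹ = (α⁻¹ 0; -γ⁻¹βα⁻¹ γ⁻¹)`, which has the same shape, gives `E⁻ ⊆ h·E_T`.
-/

open MeasureTheory Set Filter

/-- The set `E_T` from the paper, as a subset of `ℝ^m × ℝ^n`. -/
def ESet (m n : ℕ) (ψ : ℝ → ℝ) (ν₁ : (Fin m → ℝ) → ℝ) (ν₂ : (Fin n → ℝ) → ℝ)
    (T : ℝ) : Set ((Fin m → ℝ) × (Fin n → ℝ)) :=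
  {p | ν₁ p.1 ^ m < ψ (ν₂ p.2 ^ n) ∧ 1 ≤ ν₂ p.2 ^ n ∧ ν₂ p.2 ^ n < T}

/-- The set `E⁻_{T,ε}` from the paper. -/
def Eminus (m n : ℕ) (ψ : ℝ → ℝ) (ν₁ : (Fin m → ℝ) → ℝ) (ν₂ : (Fin n → ℝ) → ℝ)
    (ε T : ℝ) : Set ((Fin m → ℝ) × (Fin n → ℝ)) :=
  {p | ν₁ p.1 ^ m < (1 + ε)⁻¹ * ψ ((1 + ε) * ν₂ p.2 ^ n)
    ∧ 3/2 ≤ ν₂ p.2 ^ n ∧ ν₂ p.2 ^ n < (1 + ε)⁻¹ * T}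

/-- The set `E'_{T,ε}` from the paper. -/
def Eprime (m n : ℕ) (ψ : ℝ → ℝ) (ν₁ : (Fin m → ℝ) → ℝ) (ν₂ : (Fin n → ℝ) → ℝ)
    (ε T : ℝ) : Set ((Fin m → ℝ) × (Fin n → ℝ)) :=
  {p | ν₁ p.1 ^ m < (1 + ε) * ψ ((1 + ε)⁻¹ * ν₂ p.2 ^ n)
    ∧ 3/2 ≤ ν₂ p.2 ^ n ∧ ν₂ p.2 ^ n < (1 + ε) * T}

/-- The set `C₀` from the paper. -/
def Czero (m n : ℕ) (ψ : ℝ → ℝ) (ν₁ : (Fin m → ℝ) → ℝ) (ν₂ : (Fin n → ℝ) → ℝ) :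
    Set ((Fin m → ℝ) × (Fin n → ℝ)) :=
  {p | ν₁ p.1 ^ m < 2 * ψ 1 ∧ 1/2 < ν₂ p.2 ^ n ∧ ν₂ p.2 ^ n ≤ 3/2}

/-- The set `E⁺_{T,ε} = E'_{T,ε} ∪ C₀` from the paper. -/
def Eplus (m n : ℕ) (ψ : ℝ → ℝ) (ν₁ : (Fin m → ℝ) → ℝ) (ν₂ : (Fin n → ℝ) → ℝ)
    (ε T : ℝ) : Set ((Fin m → ℝ) × (Fin n → ℝ)) :=
  Eprime m n ψ ν₁ ν₂ ε T ∪ Czero m n ψ ν₁ ν₂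

/-- The operator norm of the linear map given by a matrix `M : ℝ^k → ℝ^l`, with respect to
a norm `νin` on the source and a norm `νout` on the target. -/
noncomputable def opNorm {k l : ℕ} (νin : (Fin k → ℝ) → ℝ) (νout : (Fin l → ℝ) → ℝ)
    (M : Matrix (Fin l) (Fin k) ℝ) : ℝ :=
  sSup ((fun x => νout (M.mulVec x)) '' {x | νin x ≤ 1})

/-- The image of a subset of `ℝ^m × ℝ^n` under the linear map given by a matrix
indexed by `Fin m ⊕ Fin n`. -/
def matImage (m n : ℕ) (h : Matrix (Fin m ⊕ Fin n) (Fin m ⊕ Fin n) ℝ)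
    (E : Set ((Fin m → ℝ) × (Fin n → ℝ))) : Set ((Fin m → ℝ) × (Fin n → ℝ)) :=
  (fun p => ((h.mulVec (Sum.elim p.1 p.2)) ∘ Sum.inl,
             (h.mulVec (Sum.elim p.1 p.2)) ∘ Sum.inr)) '' E

open Matrix

namespace Seminorm

variable {E : Type*} [NormedAddCommGroup E] [NormedSpace ℝ E] [FiniteDimensional ℝ E]

theorem continuous_of_finiteDimensional (p : Seminorm ℝ E) : Continuous p :=
  continuousOn_univ.1 (p.convexOn.continuousOn isOpen_univ)

theorem exists_pos_mul_norm_le (p : Seminorm ℝ E) (hp : ∀ x, p x = 0 → x = 0) :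
    ∃ c > 0, ∀ x, c * ‖x‖ ≤ p x := by
  rcases subsingleton_or_nontrivial E with hE | hE
  · exact ⟨1, one_pos, fun x => by simp [Subsingleton.elim x 0]⟩
  obtain ⟨z, hz, hmin⟩ := (isCompact_sphere (0 : E) 1).exists_isMinOn
    (NormedSpace.sphere_nonempty.2 zero_le_one) p.continuous_of_finiteDimensional.continuousOn
  have hz1 : ‖z‖ = 1 := mem_sphere_zero_iff_norm.1 hz
  refine ⟨p z, (apply_nonneg p z).lt_of_ne fun h => ?_, fun x => ?_⟩
  · simp [hp z h.symm] at hz1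
  rcases eq_or_ne x 0 with rfl | hx
  · simp
  have hxn : 0 < ‖x‖ := norm_pos_iff.2 hx
  have hzx : p z ≤ ‖x‖⁻¹ * p x := by
    simpa [map_smul_eq_mul, hxn.ne'] using
      hmin (a := ‖x‖⁻¹ • x) (by simp [norm_smul, hxn.ne'])
  calc p z * ‖x‖ ≤ ‖x‖⁻¹ * p x * ‖x‖ := by gcongr
    _ = p x := by field_simp

theorem exists_le_mul_of_definite (q p : Seminorm ℝ E) (hp : ∀ x, p x = 0 → x = 0) :
    ∃ K, ∀ x, q x ≤ K * p x := by
  obtain ⟨C, hC, hqC⟩ := q.bound_of_continuous_normedSpace q.continuous_of_finiteDimensional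
  obtain ⟨c, hc, hcp⟩ := p.exists_pos_mul_norm_le hp
  refine ⟨C / c, fun x => (hqC x).trans ?_⟩
  calc C * ‖x‖ ≤ C * (p x / c) := by gcongr; rw [le_div_iff₀ hc]; linarith [hcp x]
    _ = C / c * p x := by ring

end Seminorm

section OpNorm

variable {k l : ℕ} (p : Seminorm ℝ (Fin k → ℝ)) (q : Seminorm ℝ (Fin l → ℝ))
  (M : Matrix (Fin l) (Fin k) ℝ)

theorem opNorm_bddAbove (hp : ∀ x, p x = 0 → x = 0) :
    BddAbove ((fun x => q (M *ᵥ x)) '' {x | p x ≤ 1}) := by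
  obtain ⟨K, hK⟩ := (q.comp (Matrix.toLin' M)).exists_le_mul_of_definite p hp
  refine ⟨max K 0, ?_⟩
  rintro _ ⟨x, hx, rfl⟩
  calc q (M *ᵥ x) ≤ K * p x := hK x
    _ ≤ max K 0 * p x := by gcongr; exact le_max_left K 0
    _ ≤ max K 0 := mul_le_of_le_one_right (le_max_right K 0) hx

theorem opNorm_nonneg (hp : ∀ x, p x = 0 → x = 0) : 0 ≤ opNorm p q M :=
  le_csSup (opNorm_bddAbove p q M hp) ⟨0, by simp, by simp⟩

theorem le_opNorm_mul (hp : ∀ x, p x = 0 → x = 0) (x : Fin k → ℝ) :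
    q (M *ᵥ x) ≤ opNorm p q M * p x := by
  rcases eq_or_ne x 0 with rfl | hx
  · simp
  have hpx : 0 < p x := (apply_nonneg p x).lt_of_ne fun h => hx (hp x h.symm)
  have hle : q (M *ᵥ ((p x)⁻¹ • x)) ≤ opNorm p q M :=
    le_csSup (opNorm_bddAbove p q M hp)
      ⟨_, by simp [map_smul_eq_mul, abs_of_pos hpx, hpx.ne'], rfl⟩
  rw [mulVec_smul, map_smul_eq_mul, Real.norm_eq_abs, abs_inv, abs_of_pos hpx] at hle
  calc q (M *ᵥ x) = p x * ((p x)⁻¹ * q (M *ᵥ x)) := by field_simp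
    _ ≤ opNorm p q M * p x := by rw [mul_comm]; gcongr

theorem pow_apply_mulVec_le (hp : ∀ x, p x = 0 → x = 0) {r : ℕ} {c : ℝ}
    (hM : opNorm p q M ^ r ≤ c) (x : Fin k → ℝ) : q (M *ᵥ x) ^ r ≤ c * p x ^ r :=
  calc q (M *ᵥ x) ^ r ≤ (opNorm p q M * p x) ^ r := by gcongr; exact le_opNorm_mul p q M hp x
    _ = opNorm p q M ^ r * p x ^ r := mul_pow _ _ _
    _ ≤ c * p x ^ r := by gcongr

end OpNorm

theorem lowerBlocks_mulVec_inv {ι κ R : Type*} [Fintype ι] [Fintype κ] [DecidableEq ι]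
    [DecidableEq κ] [CommRing R] {α : Matrix ι ι R} {β : Matrix κ ι R} {γ : Matrix κ κ R}
    (hα : IsUnit α.det) (hγ : IsUnit γ.det) (x : ι → R) (y : κ → R) :
    (α *ᵥ (α⁻¹ *ᵥ x), β *ᵥ (α⁻¹ *ᵥ x) + γ *ᵥ (-(γ⁻¹ * β * α⁻¹) *ᵥ x + γ⁻¹ *ᵥ y)) = (x, y) := by
  simp [mulVec_add, mulVec_mulVec, ← Matrix.mul_assoc, mul_nonsing_inv _ hα, mul_nonsing_inv _ hγ]
  rw [neg_mulVec, add_neg_cancel_left]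

theorem matImage_fromBlocks_zero {m n : ℕ} (A : Matrix (Fin m) (Fin m) ℝ)
    (B : Matrix (Fin n) (Fin m) ℝ) (C : Matrix (Fin n) (Fin n) ℝ)
    (E : Set ((Fin m → ℝ) × (Fin n → ℝ))) :
    matImage m n (fromBlocks A 0 B C) E = (fun p => (A *ᵥ p.1, B *ᵥ p.1 + C *ᵥ p.2)) '' E := by
  simp only [matImage, fromBlocks_mulVec, Sum.elim_comp_inl, Sum.elim_comp_inr, zero_mulVec,
    add_zero]

theorem le_one_add_of_pow_le {a t : ℝ} {n : ℕ} (hn : n ≠ 0) (ha : 0 ≤ a) (ht : 0 ≤ t)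
    (h : a ^ n ≤ 1 + n * t) : a ≤ 1 + t :=
  (pow_le_pow_iff_left₀ ha (by linarith) hn).1 (h.trans (one_add_mul_le_pow (by linarith) n))

theorem one_add_div_pow_le {x : ℝ} (hx0 : 0 ≤ x) (hx1 : x ≤ 1) {n : ℕ} (hn : n ≠ 0) :
    (1 + x / n) ^ n ≤ 1 + x + x ^ 2 := by
  calc (1 + x / n) ^ n ≤ Real.exp (x / n) ^ n := by
        gcongr; linarith [Real.add_one_le_exp (x / n)]
    _ = Real.exp x := by rw [← Real.exp_nat_mul]; field_simp
    _ ≤ 1 + x + x ^ 2 := by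
        linarith [le_abs_self (Real.exp x - 1 - x),
          Real.abs_exp_sub_one_sub_id_le (abs_le.2 ⟨by linarith, hx1⟩)]

section Powers

variable {n : ℕ} {ε b v : ℝ}

theorem pow_le_one_add_mul_pow (hn : n ≠ 0) (hε0 : 0 ≤ ε) (hε : ε ≤ 1 / 3) (hv : 0 ≤ v)
    (h : v ≤ b * (1 + 3 * ε / (4 * n))) : v ^ n ≤ (1 + ε) * b ^ n := by
  have hb : 0 ≤ b := nonneg_of_mul_nonneg_left (hv.trans h) (by positivity)
  have hroot : (1 + 3 * ε / (4 * n)) ^ n ≤ 1 + ε := by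
    have := one_add_div_pow_le (x := 3 * ε / 4) (by positivity) (by linarith) hn
    rw [div_div] at this
    nlinarith
  calc v ^ n ≤ (b * (1 + 3 * ε / (4 * n))) ^ n := by gcongr
    _ = (1 + 3 * ε / (4 * n)) ^ n * b ^ n := by rw [mul_pow, mul_comm]
    _ ≤ (1 + ε) * b ^ n := by gcongr

theorem one_sub_mul_pow_le_pow (hn : n ≠ 0) (hε : ε ≤ 1 / 3) (hb : 0 ≤ b)
    (h : b * (1 - 3 * ε / (4 * n)) ≤ v) : (1 - 3 * ε / 4) * b ^ n ≤ v ^ n := by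
  have hn1 : (1 : ℝ) ≤ n := by exact_mod_cast Nat.one_le_iff_ne_zero.2 hn
  have ht : 3 * ε / (4 * n) ≤ 1 := by rw [div_le_one (by positivity)]; nlinarith
  have hbern := one_add_mul_le_pow (a := -(3 * ε / (4 * n))) (by linarith) n
  have hn' : (n : ℝ) * (3 * ε / (4 * n)) = 3 * ε / 4 := by field_simp
  rw [mul_neg, hn', ← sub_eq_add_neg, ← sub_eq_add_neg] at hbern
  calc (1 - 3 * ε / 4) * b ^ n ≤ (1 - 3 * ε / (4 * n)) ^ n * b ^ n := by gcongr
    _ = (b * (1 - 3 * ε / (4 * n))) ^ n := by rw [mul_pow, mul_comm]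
    _ ≤ v ^ n := by gcongr

end Powers

section Perturbation

variable {n : ℕ} (p₂ : Seminorm ℝ (Fin n → ℝ))

theorem apply_add_mulVec_mem_Icc (hp₂ : ∀ y, p₂ y = 0 → y = 0) {C : Matrix (Fin n) (Fin n) ℝ}
    (hC : IsUnit C.det) {t : ℝ} (ht0 : 0 ≤ t) (ht : t ≤ 1 / 2)
    (hCle : opNorm p₂ p₂ C ≤ 1 + 2 * t) (hCinv : opNorm p₂ p₂ C⁻¹ ≤ 1 + 2 * t)
    {u y : Fin n → ℝ} (hu : p₂ u ≤ t) (hy : 1 ≤ p₂ y) :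
    p₂ (u + C *ᵥ y) ∈ Icc (p₂ y * (1 - 3 * t)) (p₂ y * (1 + 3 * t)) := by
  have hCy : p₂ (C *ᵥ y) ≤ (1 + 2 * t) * p₂ y :=
    (le_opNorm_mul p₂ p₂ C hp₂ y).trans (by gcongr)
  have hy_le : p₂ y ≤ (1 + 2 * t) * p₂ (C *ᵥ y) :=
    calc p₂ y = p₂ (C⁻¹ *ᵥ C *ᵥ y) := by rw [mulVec_mulVec, nonsing_inv_mul _ hC, one_mulVec]
      _ ≤ opNorm p₂ p₂ C⁻¹ * p₂ (C *ᵥ y) := le_opNorm_mul p₂ p₂ _ hp₂ _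
      _ ≤ (1 + 2 * t) * p₂ (C *ᵥ y) := by gcongr
  have hadd := map_add_le_add p₂ u (C *ᵥ y)
  have hsub : p₂ (C *ᵥ y) ≤ p₂ (u + C *ᵥ y) + p₂ u := by
    simpa using map_sub_le_add p₂ (u + C *ᵥ y) u
  have htb : t ≤ t * p₂ y := le_mul_of_one_le_right ht0 hy
  refine ⟨?_, by nlinarith⟩
  nlinarith [mul_le_mul_of_nonneg_left hy_le (by linarith : (0 : ℝ) ≤ 1 - 2 * t),
    mul_nonneg (mul_nonneg ht0 ht0) (apply_nonneg p₂ (C *ᵥ y))]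

theorem pow_apply_add_mulVec_mem_Icc (hp₂ : ∀ y, p₂ y = 0 → y = 0) (hn : n ≠ 0)
    {ε : ℝ} (hε0 : 0 ≤ ε) (hε : ε ≤ 1 / 3) {C : Matrix (Fin n) (Fin n) ℝ} (hC : IsUnit C.det)
    (hCle : opNorm p₂ p₂ C ^ n < 1 + ε / 2) (hCinv : opNorm p₂ p₂ C⁻¹ ^ n < 1 + ε / 2)
    {u y : Fin n → ℝ} (hu : p₂ u ≤ ε / (4 * n)) (hy : 1 ≤ p₂ y ^ n) :
    p₂ (u + C *ᵥ y) ^ n ∈ Icc ((1 - 3 * ε / 4) * p₂ y ^ n) ((1 + ε) * p₂ y ^ n) := by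
  have hn1 : (1 : ℝ) ≤ n := by exact_mod_cast Nat.one_le_iff_ne_zero.2 hn
  have hy1 : 1 ≤ p₂ y := (one_le_pow_iff_of_nonneg (apply_nonneg p₂ y) hn).1 hy
  have hnorm {D : Matrix (Fin n) (Fin n) ℝ} (hD : opNorm p₂ p₂ D ^ n < 1 + ε / 2) :
      opNorm p₂ p₂ D ≤ 1 + 2 * (ε / (4 * n)) := by
    refine le_one_add_of_pow_le hn (opNorm_nonneg p₂ p₂ D hp₂) (by positivity) (hD.le.trans ?_)
    field_simp; linarith
  obtain ⟨hlow, hup⟩ := apply_add_mulVec_mem_Icc p₂ hp₂ hC (by positivity)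
    (by rw [div_le_iff₀ (by positivity)]; linarith) (hnorm hCle) (hnorm hCinv) hu hy1
  exact ⟨one_sub_mul_pow_le_pow hn hε (apply_nonneg p₂ y) (by rwa [mul_div_assoc]),
    pow_le_one_add_mul_pow hn hε0 hε (apply_nonneg p₂ _) (by rwa [mul_div_assoc])⟩

end Perturbation

section Block

variable {m n : ℕ} (p₁ : Seminorm ℝ (Fin m → ℝ)) (p₂ : Seminorm ℝ (Fin n → ℝ))

theorem apply_mulVec_le_of_pow_le (hp₁ : ∀ x, p₁ x = 0 → x = 0) (hm : m ≠ 0)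
    {B : Matrix (Fin n) (Fin m) ℝ} {ψ₁ δ : ℝ} (hψ₁ : 0 < ψ₁)
    (hB : opNorm p₁ p₂ B < δ / ψ₁ ^ ((1 : ℝ) / m))
    {x : Fin m → ℝ} (hx : p₁ x ^ m ≤ ψ₁) : p₂ (B *ᵥ x) ≤ δ := by
  have hP : 0 < ψ₁ ^ ((1 : ℝ) / m) := by positivity
  have hxP : p₁ x ≤ ψ₁ ^ ((1 : ℝ) / m) := by
    rw [one_div, Real.le_rpow_inv_iff_of_pos (apply_nonneg p₁ x) hψ₁.le (by positivity),
      Real.rpow_natCast]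
    exact hx
  calc p₂ (B *ᵥ x) ≤ opNorm p₁ p₂ B * p₁ x := le_opNorm_mul p₁ p₂ B hp₁ x
    _ ≤ δ / ψ₁ ^ ((1 : ℝ) / m) * ψ₁ ^ ((1 : ℝ) / m) := by
        gcongr; exact (opNorm_nonneg p₁ p₂ B hp₁).trans hB.le
    _ = δ := div_mul_cancel₀ δ hP.ne'

/-- The paper's smallness conditions on the blocks of `(A 0; B C)`. -/
def BlockBounds (ψ₁ ε : ℝ) (A : Matrix (Fin m) (Fin m) ℝ) (B : Matrix (Fin n) (Fin m) ℝ)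
    (C : Matrix (Fin n) (Fin n) ℝ) : Prop :=
  max (opNorm p₁ p₁ A ^ m) (opNorm p₂ p₂ C ^ n) < 1 + ε / 2 ∧
    opNorm p₁ p₂ B < ε / (4 * n * ψ₁ ^ ((1 : ℝ) / m))

theorem BlockBounds.pow_apply_bounds (hp₁ : ∀ x, p₁ x = 0 → x = 0)
    (hp₂ : ∀ y, p₂ y = 0 → y = 0) (hm : m ≠ 0) (hn : n ≠ 0) {ψ₁ ε : ℝ} (hψ₁ : 0 < ψ₁)
    (hε0 : 0 ≤ ε) (hε : ε ≤ 1 / 3) {A B C} (h : BlockBounds p₁ p₂ ψ₁ ε A B C)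
    (hC : IsUnit C.det) (hCinv : opNorm p₂ p₂ C⁻¹ ^ n < 1 + ε / 2)
    {x : Fin m → ℝ} {y : Fin n → ℝ} (hx : p₁ x ^ m ≤ ψ₁) (hy : 1 ≤ p₂ y ^ n) :
    p₁ (A *ᵥ x) ^ m ≤ (1 + ε / 2) * p₁ x ^ m ∧
      p₂ (B *ᵥ x + C *ᵥ y) ^ n ∈ Icc ((1 - 3 * ε / 4) * p₂ y ^ n) ((1 + ε) * p₂ y ^ n) := by
  obtain ⟨hAC, hB⟩ := h
  rw [max_lt_iff] at hAC
  have hBx : p₂ (B *ᵥ x) ≤ ε / (4 * n) :=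
    apply_mulVec_le_of_pow_le p₁ p₂ hp₁ hm hψ₁ (by rwa [div_div]) hx
  exact ⟨pow_apply_mulVec_le p₁ p₁ A hp₁ hAC.1.le x,
    pow_apply_add_mulVec_mem_Icc p₂ hp₂ hn hε0 hε hC hAC.2 hCinv hBx hy⟩

end Block

section Inclusions

variable {m n : ℕ} (p₁ : Seminorm ℝ (Fin m → ℝ)) (p₂ : Seminorm ℝ (Fin n → ℝ))
  {ψ : ℝ → ℝ} {ε : ℝ} (T : ℝ) {α : Matrix (Fin m) (Fin m) ℝ} {β : Matrix (Fin n) (Fin m) ℝ}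
  {γ : Matrix (Fin n) (Fin n) ℝ}

theorem matImage_subset_Eplus (hψpos : ∀ t : ℝ, 1 ≤ t → 0 < ψ t)
    (hψanti : AntitoneOn ψ (Ici 1)) (hp₁ : ∀ x, p₁ x = 0 → x = 0)
    (hp₂ : ∀ y, p₂ y = 0 → y = 0) (hm : m ≠ 0) (hn : n ≠ 0) (hε0 : 0 ≤ ε) (hε : ε ≤ 1 / 3)
    (h : BlockBounds p₁ p₂ (ψ 1) ε α β γ) (hγ : IsUnit γ.det)
    (hγinv : opNorm p₂ p₂ γ⁻¹ ^ n < 1 + ε / 2) :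
    matImage m n (fromBlocks α 0 β γ) (ESet m n ψ p₁ p₂ T) ⊆ Eplus m n ψ p₁ p₂ ε T := by
  rw [matImage_fromBlocks_zero]
  rintro _ ⟨⟨x, y⟩, ⟨hxψ, hy, hyT⟩, rfl⟩
  have hψy : ψ (p₂ y ^ n) ≤ ψ 1 := hψanti self_mem_Ici hy hy
  obtain ⟨hαx, hlow, hup⟩ :=
    h.pow_apply_bounds p₁ p₂ hp₁ hp₂ hm hn (hψpos 1 le_rfl) hε0 hε hγ hγinv (hxψ.le.trans hψy) hy
  have hαx' : p₁ (α *ᵥ x) ^ m < (1 + ε / 2) * ψ (p₂ y ^ n) := hαx.trans_lt (by gcongr)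
  by_cases hv : p₂ (β *ᵥ x + γ *ᵥ y) ^ n ≤ 3 / 2
  · refine Or.inr ⟨hαx'.trans_le ?_, by nlinarith, hv⟩
    nlinarith [hψpos 1 le_rfl]
  · rw [not_le] at hv
    have hv1 : 1 ≤ (1 + ε)⁻¹ * p₂ (β *ᵥ x + γ *ᵥ y) ^ n := by
      rw [← div_eq_inv_mul, le_div_iff₀ (by linarith)]; linarith
    have hvy : (1 + ε)⁻¹ * p₂ (β *ᵥ x + γ *ᵥ y) ^ n ≤ p₂ y ^ n := by
      rw [inv_mul_le_iff₀ (by linarith)]; exact hup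
    refine Or.inl ⟨hαx'.trans_le ?_, hv.le, hup.trans_lt (by gcongr)⟩
    exact mul_le_mul (by linarith) (hψanti hv1 hy hvy) (hψpos _ hy).le (by linarith)

theorem Eminus_subset_matImage (hψpos : ∀ t : ℝ, 1 ≤ t → 0 < ψ t)
    (hψanti : AntitoneOn ψ (Ici 1)) (hp₁ : ∀ x, p₁ x = 0 → x = 0)
    (hp₂ : ∀ y, p₂ y = 0 → y = 0) (hm : m ≠ 0) (hn : n ≠ 0) (hε0 : 0 ≤ ε) (hε : ε ≤ 1 / 3)
    (hα : IsUnit α.det) (hγ : IsUnit γ.det)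
    (h : BlockBounds p₁ p₂ (ψ 1) ε α⁻¹ (-(γ⁻¹ * β * α⁻¹)) γ⁻¹)
    (hγle : opNorm p₂ p₂ γ ^ n < 1 + ε / 2) :
    Eminus m n ψ p₁ p₂ ε T ⊆ matImage m n (fromBlocks α 0 β γ) (ESet m n ψ p₁ p₂ T) := by
  rw [matImage_fromBlocks_zero]
  rintro ⟨x, y⟩ ⟨hxψ, hy, hyT⟩
  have hε1 : 0 < 1 + ε := by linarith
  have hyε : 1 ≤ (1 + ε) * p₂ y ^ n := by nlinarith
  have hψyε : 0 < ψ ((1 + ε) * p₂ y ^ n) := hψpos _ hyε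
  have hx : p₁ x ^ m ≤ ψ 1 := by
    refine hxψ.le.trans ((inv_mul_le_iff₀ hε1).2 ?_)
    nlinarith [hψanti self_mem_Ici hyε hyε]
  obtain ⟨hαx, hlow, hup⟩ := h.pow_apply_bounds p₁ p₂ hp₁ hp₂ hm hn (hψpos 1 le_rfl) hε0 hε
    (isUnit_nonsing_inv_det γ hγ) (by rwa [nonsing_inv_nonsing_inv γ hγ]) hx (by linarith)
  have hv1 : 1 ≤ p₂ (-(γ⁻¹ * β * α⁻¹) *ᵥ x + γ⁻¹ *ᵥ y) ^ n := by nlinarith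
  refine ⟨(α⁻¹ *ᵥ x, -(γ⁻¹ * β * α⁻¹) *ᵥ x + γ⁻¹ *ᵥ y), ⟨?_, hv1, ?_⟩,
    lowerBlocks_mulVec_inv hα hγ x y⟩
  · calc p₁ (α⁻¹ *ᵥ x) ^ m ≤ (1 + ε / 2) * p₁ x ^ m := hαx
      _ < (1 + ε / 2) * ((1 + ε)⁻¹ * ψ ((1 + ε) * p₂ y ^ n)) := by gcongr
      _ ≤ ψ ((1 + ε) * p₂ y ^ n) := by
          rw [← mul_assoc, ← div_eq_mul_inv]
          exact mul_le_of_le_one_left hψyε.le ((div_le_one hε1).2 (by linarith))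
      _ ≤ ψ (p₂ (-(γ⁻¹ * β * α⁻¹) *ᵥ x + γ⁻¹ *ᵥ y) ^ n) := hψanti hv1 hyε hup
  · calc _ ≤ (1 + ε) * p₂ y ^ n := hup
      _ < (1 + ε) * ((1 + ε)⁻¹ * T) := by gcongr
      _ = T := by field_simp

end Inclusions

theorem ET_stable_explicit_bounds_general (m n : ℕ) (hm : 1 ≤ m) (hn : 1 ≤ n)
    (ψ : ℝ → ℝ)
    (hψpos : ∀ t : ℝ, 1 ≤ t → 0 < ψ t)
    (hψanti : AntitoneOn ψ (Set.Ici 1))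
    (ν₁ : (Fin m → ℝ) → ℝ)
    (hν₁add : ∀ x y, ν₁ (x + y) ≤ ν₁ x + ν₁ y)
    (hν₁smul : ∀ (c : ℝ) x, ν₁ (c • x) = |c| * ν₁ x)
    (hν₁def : ∀ x, ν₁ x = 0 ↔ x = 0)
    (ν₂ : (Fin n → ℝ) → ℝ)
    (hν₂add : ∀ x y, ν₂ (x + y) ≤ ν₂ x + ν₂ y)
    (hν₂smul : ∀ (c : ℝ) x, ν₂ (c • x) = |c| * ν₂ x)
    (hν₂def : ∀ x, ν₂ x = 0 ↔ x = 0) :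
    ∃ c₀ : ℝ, 0 < c₀ ∧ c₀ < 1/2 ∧
      ∀ ε : ℝ, 0 < ε → ε < c₀ → ∀ T : ℝ, 10 < T →
        ∀ (α : Matrix (Fin m) (Fin m) ℝ) (β : Matrix (Fin n) (Fin m) ℝ)
          (γ : Matrix (Fin n) (Fin n) ℝ),
          IsUnit α.det → IsUnit γ.det →
          (Matrix.fromBlocks α 0 β γ).det = 1 →
          max (opNorm ν₁ ν₁ α ^ m) (opNorm ν₂ ν₂ γ ^ n) < 1 + ε / 2 →
          opNorm ν₁ ν₂ β < ε / (4 * n * ψ 1 ^ ((1 : ℝ) / m)) →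
          max (opNorm ν₁ ν₁ α⁻¹ ^ m) (opNorm ν₂ ν₂ γ⁻¹ ^ n) < 1 + ε / 2 →
          opNorm ν₁ ν₂ (-(γ⁻¹ * β * α⁻¹)) < ε / (4 * n * ψ 1 ^ ((1 : ℝ) / m)) →
          Eminus m n ψ ν₁ ν₂ ε T
              ⊆ matImage m n (Matrix.fromBlocks α 0 β γ) (ESet m n ψ ν₁ ν₂ T)
            ∧ matImage m n (Matrix.fromBlocks α 0 β γ) (ESet m n ψ ν₁ ν₂ T)
              ⊆ Eplus m n ψ ν₁ ν₂ ε T := by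
  let p₁ : Seminorm ℝ (Fin m → ℝ) := .of ν₁ hν₁add fun c x => hν₁smul c x
  let p₂ : Seminorm ℝ (Fin n → ℝ) := .of ν₂ hν₂add fun c x => hν₂smul c x
  have hp₁ : ∀ x, p₁ x = 0 → x = 0 := fun x => (hν₁def x).1
  have hp₂ : ∀ y, p₂ y = 0 → y = 0 := fun y => (hν₂def y).1
  refine ⟨1 / 3, by norm_num, by norm_num, ?_⟩
  intro ε hε0 hε T _ α β γ hα hγ _ hmax hβ hmax' hβ'
  have hm0 : m ≠ 0 := Nat.one_le_iff_ne_zero.1 hm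
  have hn0 : n ≠ 0 := Nat.one_le_iff_ne_zero.1 hn
  exact ⟨Eminus_subset_matImage p₁ p₂ T hψpos hψanti hp₁ hp₂ hm0 hn0 hε0.le hε.le hα hγ
      ⟨hmax', hβ'⟩ (lt_of_le_of_lt (le_max_right _ _) hmax),
    matImage_subset_Eplus p₁ p₂ T hψpos hψanti hp₁ hp₂ hm0 hn0 hε0.le hε.le ⟨hmax, hβ⟩ hγ
      (lt_of_le_of_lt (le_max_right _ _) hmax')⟩

theorem ET_stable_explicit_bounds (m n : ℕ) (hm : 1 ≤ m) (hn : 1 ≤ n)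
    (ψ : ℝ → ℝ)
    (hψpos : ∀ t : ℝ, 1 ≤ t → 0 < ψ t)
    (hψcont : ContinuousOn ψ (Set.Ici 1))
    (hψanti : AntitoneOn ψ (Set.Ici 1))
    (ν₁ : (Fin m → ℝ) → ℝ)
    (hν₁add : ∀ x y, ν₁ (x + y) ≤ ν₁ x + ν₁ y)
    (hν₁smul : ∀ (c : ℝ) x, ν₁ (c • x) = |c| * ν₁ x)
    (hν₁def : ∀ x, ν₁ x = 0 ↔ x = 0)
    (ν₂ : (Fin n → ℝ) → ℝ)
    (hν₂add : ∀ x y, ν₂ (x + y) ≤ ν₂ x + ν₂ y)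
    (hν₂smul : ∀ (c : ℝ) x, ν₂ (c • x) = |c| * ν₂ x)
    (hν₂def : ∀ x, ν₂ x = 0 ↔ x = 0) :
    ∃ c₀ : ℝ, 0 < c₀ ∧ c₀ < 1/2 ∧
      ∀ ε : ℝ, 0 < ε → ε < c₀ → ∀ T : ℝ, 10 < T →
        ∀ (α : Matrix (Fin m) (Fin m) ℝ) (β : Matrix (Fin n) (Fin m) ℝ)
          (γ : Matrix (Fin n) (Fin n) ℝ),
          IsUnit α.det → IsUnit γ.det →
          (Matrix.fromBlocks α 0 β γ).det = 1 →
          max (opNorm ν₁ ν₁ α ^ m) (opNorm ν₂ ν₂ γ ^ n) < 1 + ε / 2 →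
          opNorm ν₁ ν₂ β < ε / (4 * n * ψ 1 ^ ((1 : ℝ) / m)) →
          max (opNorm ν₁ ν₁ α⁻¹ ^ m) (opNorm ν₂ ν₂ γ⁻¹ ^ n) < 1 + ε / 2 →
          opNorm ν₁ ν₂ (-(γ⁻¹ * β * α⁻¹)) < ε / (4 * n * ψ 1 ^ ((1 : ℝ) / m)) →
          Eminus m n ψ ν₁ ν₂ ε T
              ⊆ matImage m n (Matrix.fromBlocks α 0 β γ) (ESet m n ψ ν₁ ν₂ T)
            ∧ matImage m n (Matrix.fromBlocks α 0 β γ) (ESet m n ψ ν₁ ν₂ T)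
              ⊆ Eplus m n ψ ν₁ ν₂ ε T :=
  ET_stable_explicit_bounds_general m n hm hn ψ hψpos hψanti ν₁ hν₁add hν₁smul hν₁def ν₂ hν₂add
    hν₂smul hν₂def
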